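/- Let P = {x ∈ ℝⁿ : Ax = b, Bx ≤ d} be a 0/1 polytope, let c ∈ ℤⁿ, and let x be a vertex of P that does not minimize cᵀx over P. Then the maximum of −cᵀg/‖g‖₁ over all circuits g ∈ C(A,B) with x + εg ∈ P for some ε > 0 is attained by a circuit that is an edge-direction of P at x, i.e., that spans an extreme ray of the feasible cone of P at x. -/

import Mathlib

noncomputable section

variable {n mA mB : ℕ}

/-- The real matrix obtained from an integer matrix. -/
def rmat {m k : Type*} (M : Matrix m k ℤ) : Matrix m k ℝ := M.map (fun z => (z : ℝ))

/-- The real vector obtained from an integer vector. -/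
def rvec {m : Type*} (v : m → ℤ) : m → ℝ := fun i => (v i : ℝ)

/-- The feasible region `P = {x : Ax = b, Bx ≤ d}`. -/
def Pset (A : Matrix (Fin mA) (Fin n) ℤ) (B : Matrix (Fin mB) (Fin n) ℤ)
    (b : Fin mA → ℤ) (d : Fin mB → ℤ) : Set (Fin n → ℝ) :=
  {x | (rmat A).mulVec x = rvec b ∧ ∀ i, (rmat B).mulVec x i ≤ (d i : ℝ)}

/-- `g` is a circuit of the system `Ax = b, Bx ≤ d`:  `g` is a nonzero kernel element of `A`
whose image `Bg` is support-minimal among `{By : y ∈ ker A, y ≠ 0}`. -/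
def IsCircuit (A : Matrix (Fin mA) (Fin n) ℤ) (B : Matrix (Fin mB) (Fin n) ℤ)
    (g : Fin n → ℝ) : Prop :=
  g ≠ 0 ∧ (rmat A).mulVec g = 0 ∧
    ∀ y : Fin n → ℝ, y ≠ 0 → (rmat A).mulVec y = 0 →
      ¬ ({i | (rmat B).mulVec y i ≠ 0} ⊂ {i | (rmat B).mulVec g i ≠ 0})

/-- The set `C(A,B)` of circuits, normalized to have coprime integer components. -/
def CAB (A : Matrix (Fin mA) (Fin n) ℤ) (B : Matrix (Fin mB) (Fin n) ℤ) :
    Set (Fin n → ℝ) :=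
  {g | IsCircuit A B g ∧ ∃ gz : Fin n → ℤ, (∀ i, g i = (gz i : ℝ)) ∧
        Finset.univ.gcd (fun i => (gz i).natAbs) = 1}

/-- `cᵀx` for an integer objective `c` and a real point `x`. -/
def dotIC (c : Fin n → ℤ) (x : Fin n → ℝ) : ℝ := ∑ i, (c i : ℝ) * x i

/-- The 1-norm of a vector. -/
def norm1 (x : Fin n → ℝ) : ℝ := ∑ i, |x i|

/-- `α g` is a maximal augmentation at `x` (within `P`). -/
def IsMaxAug (P : Set (Fin n → ℝ)) (x g : Fin n → ℝ) (α : ℝ) : Prop :=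
  0 < α ∧ x + α • g ∈ P ∧ ∀ ε : ℝ, 0 < ε → x + (α + ε) • g ∉ P

/-- `δ`: the largest absolute value of the determinant of an `n × n` submatrix of the
stacked matrix `(A; B)`. -/
def deltaMax (A : Matrix (Fin mA) (Fin n) ℤ) (B : Matrix (Fin mB) (Fin n) ℤ) : ℝ :=
  sSup {r : ℝ | ∃ f : Fin n → (Fin mA ⊕ Fin mB), Function.Injective f ∧
        r = |((((Matrix.fromRows A B).submatrix f id).det : ℤ) : ℝ)|}

/-- The feasible cone of `P = {Ax = b, Bx ≤ d}` at `x`: directions `z` with `Az = 0` and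
`B_T z ≤ 0`, where `T` is the set of rows of `B` tight at `x`. -/
def feasCone (A : Matrix (Fin mA) (Fin n) ℤ) (B : Matrix (Fin mB) (Fin n) ℤ)
    (d : Fin mB → ℤ) (x : Fin n → ℝ) : Set (Fin n → ℝ) :=
  {z | (rmat A).mulVec z = 0 ∧
       ∀ i, (rmat B).mulVec x i = (d i : ℝ) → (rmat B).mulVec z i ≤ 0}

/-- `g` is an edge-direction at the vertex `x`: it spans an extreme ray of the feasible
cone of `P` at `x`. -/
def IsEdgeDirAt (A : Matrix (Fin mA) (Fin n) ℤ) (B : Matrix (Fin mB) (Fin n) ℤ)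
    (d : Fin mB → ℤ) (x g : Fin n → ℝ) : Prop :=
  g ≠ 0 ∧ g ∈ feasCone A B d x ∧
    ∀ y ∈ feasCone A B d x, ∀ z ∈ feasCone A B d x, g = y + z →
      ∃ μ : ℝ, 0 ≤ μ ∧ y = μ • g

/-! A bounded polytope with 0/1 vertices lies in the unit cube, so a feasible direction `z` at a
0/1 vertex `x` has `zᵢ ≥ 0` where `xᵢ = 0` and `zᵢ ≤ 0` where `xᵢ = 1`; hence
`‖z‖₁ = ∑ᵢ (1 - 2 xᵢ) zᵢ` is linear on the feasible cone. The steepest-descent ratio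
is then a linear objective on the compact slice `{z ∈ cone | ‖z‖₁ = 1}`, maximised at an extreme
point of the slice, that is, on an extreme ray of the cone. A generator of an extreme ray is
determined up to scale by the rows of `B` it annihilates, so it is support-minimal (a circuit),
and since those rows are integral it has a positive multiple with coprime integer entries. -/

open Set Filter Topology Matrix

def IsExtremeDir {E : Type*} [AddCommGroup E] [Module ℝ E] (C : Set E) (g : E) : Prop :=
  ∀ y ∈ C, ∀ z ∈ C, g = y + z → ∃ μ : ℝ, 0 ≤ μ ∧ y = μ • g

section ExtremeDir

variable {E : Type*} [AddCommGroup E] [Module ℝ E] {C : Set E} {g : E}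

theorem isExtremeDir_of_mem_extremePoints (hC : ∀ t : ℝ, 0 ≤ t → ∀ z ∈ C, t • z ∈ C)
    {L : E →ₗ[ℝ] ℝ} (hL : ∀ z ∈ C, z ≠ 0 → 0 < L z)
    (hg : g ∈ extremePoints ℝ (C ∩ {z | L z = 1})) : IsExtremeDir C g := by
  intro y hy z hz hyz
  rcases eq_or_ne y 0 with rfl | hy0
  · exact ⟨0, le_rfl, (zero_smul ℝ g).symm⟩
  rcases eq_or_ne z 0 with rfl | hz0
  · exact ⟨1, zero_le_one, by rw [one_smul, hyz, add_zero]⟩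
  have hnormalize : ∀ w ∈ C, 0 < L w → (L w)⁻¹ • w ∈ C ∩ {z | L z = 1} := fun w hw hpos =>
    ⟨hC _ (inv_nonneg.2 hpos.le) w hw, by simp [hpos.ne']⟩
  have hLy := hL y hy hy0
  have hLz := hL z hz hz0
  have hseg : g ∈ openSegment ℝ ((L y)⁻¹ • y) ((L z)⁻¹ • z) := by
    refine ⟨L y, L z, hLy, hLz, ?_, ?_⟩
    · rw [← map_add, ← hyz]; exact hg.1.2
    · rw [smul_inv_smul₀ hLy.ne', smul_inv_smul₀ hLz.ne', hyz]
  have hyg : (L y)⁻¹ • y = g := hg.2 (hnormalize y hy hLy) (hnormalize z hz hLz) hseg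
  exact ⟨L y, hLy.le, by rw [← hyg, smul_inv_smul₀ hLy.ne']⟩

theorem IsExtremeDir.exists_eq_smul (hC : ∀ t : ℝ, 0 ≤ t → ∀ z ∈ C, t • z ∈ C)
    (hg : IsExtremeDir C g) {w : E} (hw : ∀ᶠ s in 𝓝 (0 : ℝ), g + s • w ∈ C) :
    ∃ t : ℝ, w = t • g := by
  have hw' : ∀ᶠ s in 𝓝[≠] (0 : ℝ), (g + s • w ∈ C ∧ g + (-s) • w ∈ C) ∧ s ≠ 0 :=
    ((hw.and ((continuous_neg.tendsto' 0 0 neg_zero).eventually hw)).filter_mono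
      nhdsWithin_le_nhds).and self_mem_nhdsWithin
  obtain ⟨s, ⟨hs_pos, hs_neg⟩, hs0⟩ := hw'.exists
  obtain ⟨μ, -, hμ⟩ := hg _ (hC (1 / 2) (by norm_num) _ hs_pos) _
    (hC (1 / 2) (by norm_num) _ hs_neg) (by module)
  have hsw : s • w = (2 * μ - 1) • g := by linear_combination (norm := module) (2 : ℝ) • hμ
  exact ⟨(2 * μ - 1) / s, by rw [div_eq_inv_mul, mul_smul, ← hsw, inv_smul_smul₀ hs0]⟩

end ExtremeDir

section KreinMilman

variable {E : Type*} [AddCommGroup E] [Module ℝ E] [TopologicalSpace E] [T2Space E]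
  [IsTopologicalAddGroup E] [ContinuousSMul ℝ E] [LocallyConvexSpace ℝ E] {K : Set E}

theorem IsCompact.exists_mem_extremePoints_isMaxOn (hK : IsCompact K) (hne : K.Nonempty)
    (f : E →L[ℝ] ℝ) : ∃ y ∈ extremePoints ℝ K, IsMaxOn f K y := by
  obtain ⟨z, hz, hzmax⟩ := hK.exists_isMaxOn hne f.continuous.continuousOn
  have hF : IsExposed ℝ K {y ∈ K | ∀ w ∈ K, f w ≤ f y} := fun _ => ⟨f, rfl⟩
  obtain ⟨y, hy⟩ := (hF.isCompact hK).extremePoints_nonempty ⟨z, hz, fun w hw => hzmax hw⟩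
  exact ⟨y, hF.isExtreme.extremePoints_subset_extremePoints hy, fun w hw => hy.1.2 w hw⟩

theorem IsCompact.subset_of_extremePoints_subset (hK : IsCompact K) (hKc : Convex ℝ K)
    {S : Set E} (hS : IsClosed S) (hSc : Convex ℝ S) (h : extremePoints ℝ K ⊆ S) : K ⊆ S := by
  rw [← closure_convexHull_extremePoints hK hKc]
  exact closure_minimal (convexHull_min h hSc) hS

end KreinMilman

theorem exists_isExtremeDir_forall_div_le {E : Type*} [NormedAddCommGroup E] [NormedSpace ℝ E]
    [FiniteDimensional ℝ E] {C : Set E} (hC : ∀ t : ℝ, 0 ≤ t → ∀ z ∈ C, t • z ∈ C)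
    (L f : E →ₗ[ℝ] ℝ) (hL : ∀ z ∈ C, z ≠ 0 → 0 < L z) (hQ : IsCompact (C ∩ {z | L z = 1}))
    (hne : ∃ z ∈ C, z ≠ 0) :
    ∃ g ∈ C, L g = 1 ∧ IsExtremeDir C g ∧ ∀ z ∈ C, z ≠ 0 → f z / L z ≤ f g := by
  have hnormalize : ∀ z ∈ C, z ≠ 0 → (L z)⁻¹ • z ∈ C ∩ {z | L z = 1} := fun z hz hz0 =>
    ⟨hC _ (inv_nonneg.2 (hL z hz hz0).le) z hz, by simp [(hL z hz hz0).ne']⟩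
  obtain ⟨z, hz, hz0⟩ := hne
  obtain ⟨g, hg, hmax⟩ := hQ.exists_mem_extremePoints_isMaxOn ⟨_, hnormalize z hz hz0⟩
    (LinearMap.toContinuousLinearMap f)
  refine ⟨g, hg.1.1, hg.1.2, isExtremeDir_of_mem_extremePoints hC hL hg, fun z hz hz0 => ?_⟩
  simpa [div_eq_inv_mul] using hmax (hnormalize z hz hz0)

theorem Finset.gcd_natAbs {ι : Type*} (s : Finset ι) (f : ι → ℤ) :
    s.gcd (fun i => (f i).natAbs) = (s.gcd f).natAbs := by
  classical
  induction s using Finset.induction_on with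
  | empty => simp
  | insert _ _ _ ih => rw [Finset.gcd_insert, Finset.gcd_insert, ih]; rfl

theorem exists_gcd_natAbs_eq_one_smul {ι : Type*} [Fintype ι] {w : ι → ℤ} (hw : w ≠ 0) :
    ∃ gz : ι → ℤ, Finset.univ.gcd (fun i => (gz i).natAbs) = 1 ∧
      ∃ r : ℝ, 0 < r ∧ rvec gz = r • rvec w := by
  obtain ⟨i, hi⟩ := Function.ne_iff.1 hw
  have hG0 : Finset.univ.gcd w ≠ 0 :=
    mt Finset.gcd_eq_zero_iff.1 fun h => hi (h i (Finset.mem_univ i))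
  have hG : 0 < Finset.univ.gcd w := by
    rw [← Finset.normalize_gcd, ← Int.abs_eq_normalize]
    exact abs_pos.2 hG0
  refine ⟨fun j => w j / Finset.univ.gcd w, ?_, ((Finset.univ.gcd w : ℤ) : ℝ)⁻¹, by positivity,
    funext fun j => ?_⟩
  · rw [Finset.gcd_natAbs, Finset.gcd_div_eq_one (Finset.mem_univ i) hi, Int.natAbs_one]
  · simp only [rvec, Pi.smul_apply, smul_eq_mul]
    rw [Int.cast_div_charZero (Finset.gcd_dvd (Finset.mem_univ j)), div_eq_inv_mul]

theorem rmat_mulVec_rvec {m k : Type*} [Fintype k] (M : Matrix m k ℤ) (w : k → ℤ) :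
    rmat M *ᵥ rvec w = rvec (M *ᵥ w) :=
  funext fun i => ((Int.castRingHom ℝ).map_mulVec M w i).symm

theorem rvec_eq_zero {m : Type*} {w : m → ℤ} : rvec w = 0 ↔ w = 0 := by
  simp [funext_iff, rvec]

theorem exists_ne_zero_mulVec_eq_zero_of_rmat {m k : Type*} [Finite m] [Fintype k]
    (M : Matrix m k ℤ) {v : k → ℝ} (hv : v ≠ 0) (hMv : rmat M *ᵥ v = 0) :
    ∃ w : k → ℤ, w ≠ 0 ∧ M *ᵥ w = 0 := by
  have hdep : ¬ LinearIndependent ℤ fun j i => M i j := by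
    rw [← linearIndependent_algebraMap_comp_iff (S := ℝ), Fintype.linearIndependent_iff]
    push Not
    refine ⟨v, funext fun i => ?_, Function.ne_iff.1 hv⟩
    simpa [rmat, mulVec, dotProduct, Finset.sum_apply, mul_comm] using congrFun hMv i
  rw [Fintype.linearIndependent_iff] at hdep
  push Not at hdep
  obtain ⟨w, hw, j, hj⟩ := hdep
  refine ⟨w, Function.ne_iff.2 ⟨j, hj⟩, funext fun i => ?_⟩
  simpa [Finset.sum_apply, mulVec, dotProduct, mul_comm] using congrFun hw i

theorem norm1_pos {z : Fin n → ℝ} (hz : z ≠ 0) : 0 < norm1 z := by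
  obtain ⟨i, hi⟩ := Function.ne_iff.1 hz
  exact Finset.sum_pos' (fun j _ => abs_nonneg _) ⟨i, Finset.mem_univ i, abs_pos.2 hi⟩

theorem isCompact_setOf_norm1_eq_one : IsCompact {z : Fin n → ℝ | norm1 z = 1} := by
  refine Metric.isCompact_of_isClosed_isBounded
    (isClosed_eq (by unfold norm1; fun_prop) continuous_const) ?_
  refine (Metric.isBounded_iff_subset_closedBall 0).2 ⟨1, fun z hz => ?_⟩
  rw [mem_closedBall_zero_iff, pi_norm_le_iff_of_nonneg zero_le_one]
  intro i
  rw [Real.norm_eq_abs, ← (hz : norm1 z = 1)]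
  exact Finset.single_le_sum (fun j _ => abs_nonneg (z j)) (Finset.mem_univ i)

theorem eventually_add_mul_lt {α β γ : ℝ} (h : α < γ) : ∀ᶠ s in 𝓝 (0 : ℝ), α + s * β < γ := by
  have hcont : Continuous fun s : ℝ => α + s * β := by fun_prop
  have hlim := hcont.tendsto 0
  rw [zero_mul, add_zero] at hlim
  exact hlim.eventually_lt_const h

section Polytope

variable {A : Matrix (Fin mA) (Fin n) ℤ} {B : Matrix (Fin mB) (Fin n) ℤ} {b : Fin mA → ℤ}
  {d : Fin mB → ℤ} {x g : Fin n → ℝ}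

theorem Pset_eq_preimage : Pset A B b d =
    (rmat A).mulVecLin ⁻¹' {rvec b} ∩ (rmat B).mulVecLin ⁻¹' univ.pi fun i => Iic (d i : ℝ) := by
  ext; simp [Pset, Pi.le_def]

theorem convex_Pset : Convex ℝ (Pset A B b d) := by
  rw [Pset_eq_preimage]
  exact ((convex_singleton _).linear_preimage _).inter
    ((convex_pi fun _ _ => convex_Iic _).linear_preimage _)

theorem isClosed_Pset : IsClosed (Pset A B b d) := by
  rw [Pset_eq_preimage]
  exact (isClosed_singleton.preimage (LinearMap.continuous_of_finiteDimensional _)).inter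
    ((isClosed_set_pi fun _ _ => isClosed_Iic).preimage
      (LinearMap.continuous_of_finiteDimensional _))

theorem Pset_subset_pi_Icc (hbdd : Bornology.IsBounded (Pset A B b d))
    (h01 : ∀ v ∈ extremePoints ℝ (Pset A B b d), ∀ i, v i = 0 ∨ v i = 1) :
    Pset A B b d ⊆ univ.pi fun _ => Icc 0 1 :=
  (Metric.isCompact_of_isClosed_isBounded isClosed_Pset hbdd).subset_of_extremePoints_subset
    convex_Pset (isClosed_set_pi fun _ _ => isClosed_Icc) (convex_pi fun _ _ => convex_Icc 0 1)
    fun v hv i _ => by rcases h01 v hv i with h | h <;> simp [h]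

theorem feasCone_eq_preimage : feasCone A B d x =
    (rmat A).mulVecLin ⁻¹' {0} ∩
      (rmat B).mulVecLin ⁻¹' {i | (rmat B *ᵥ x) i = d i}.pi fun _ => Iic 0 := by
  ext; simp [feasCone]

theorem isClosed_feasCone : IsClosed (feasCone A B d x) := by
  rw [feasCone_eq_preimage]
  exact (isClosed_singleton.preimage (LinearMap.continuous_of_finiteDimensional _)).inter
    ((isClosed_set_pi fun _ _ => isClosed_Iic).preimage
      (LinearMap.continuous_of_finiteDimensional _))

theorem smul_mem_feasCone {t : ℝ} (ht : 0 ≤ t) {z : Fin n → ℝ} (hz : z ∈ feasCone A B d x) :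
    t • z ∈ feasCone A B d x := by
  refine ⟨by rw [mulVec_smul, hz.1, smul_zero], fun i hi => ?_⟩
  rw [mulVec_smul, Pi.smul_apply, smul_eq_mul]
  exact mul_nonpos_of_nonneg_of_nonpos ht (hz.2 i hi)

theorem mem_feasCone_of_add_smul_mem_Pset (hx : x ∈ Pset A B b d) {ε : ℝ} (hε : 0 < ε)
    {z : Fin n → ℝ} (hz : x + ε • z ∈ Pset A B b d) : z ∈ feasCone A B d x := by
  obtain ⟨hzA, hzB⟩ := hz
  rw [mulVec_add, mulVec_smul, hx.1, add_eq_left, smul_eq_zero] at hzA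
  refine ⟨hzA.resolve_left hε.ne', fun i hi => ?_⟩
  have hrow := hzB i
  rw [mulVec_add, mulVec_smul, Pi.add_apply, Pi.smul_apply, smul_eq_mul, hi,
    add_le_iff_nonpos_right] at hrow
  exact nonpos_of_mul_nonpos_right hrow hε

theorem exists_pos_add_smul_mem_Pset (hx : x ∈ Pset A B b d) {z : Fin n → ℝ}
    (hz : z ∈ feasCone A B d x) : ∃ ε : ℝ, 0 < ε ∧ x + ε • z ∈ Pset A B b d := by
  have hrow : ∀ i, ∀ᶠ s in 𝓝[>] (0 : ℝ), (rmat B *ᵥ x) i + s * (rmat B *ᵥ z) i ≤ d i := by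
    intro i
    rcases (hx.2 i).lt_or_eq with hlt | htight
    · exact nhdsWithin_le_nhds ((eventually_add_mul_lt hlt).mono fun _ => le_of_lt)
    · filter_upwards [self_mem_nhdsWithin] with s hs
      rw [htight, add_le_iff_nonpos_right]
      exact mul_nonpos_of_nonneg_of_nonpos (le_of_lt hs) (hz.2 i htight)
  obtain ⟨ε, hε, hεpos⟩ := ((eventually_all.2 hrow).and self_mem_nhdsWithin).exists
  refine ⟨ε, hεpos, ?_, fun i => ?_⟩
  · rw [mulVec_add, mulVec_smul, hz.1, hx.1, smul_zero, add_zero]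
  · simpa [mulVec_add, mulVec_smul] using hε i

theorem eventually_add_smul_mem_feasCone {w : Fin n → ℝ} (hg : g ∈ feasCone A B d x)
    (hwA : rmat A *ᵥ w = 0) (hwB : ∀ i, (rmat B *ᵥ g) i = 0 → (rmat B *ᵥ w) i = 0) :
    ∀ᶠ s in 𝓝 (0 : ℝ), g + s • w ∈ feasCone A B d x := by
  have hrow : ∀ i, ∀ᶠ s in 𝓝 (0 : ℝ),
      (rmat B *ᵥ x) i = d i → (rmat B *ᵥ g) i + s * (rmat B *ᵥ w) i ≤ 0 := by
    intro i
    by_cases htight : (rmat B *ᵥ x) i = d i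
    · rcases (hg.2 i htight).lt_or_eq with hlt | hzero
      · exact (eventually_add_mul_lt hlt).mono fun _ h _ => le_of_lt h
      · exact Eventually.of_forall fun s _ => by rw [hzero, hwB i hzero]; simp
    · exact Eventually.of_forall fun _ h => absurd h htight
  filter_upwards [eventually_all.2 hrow] with s hs
  refine ⟨by rw [mulVec_add, mulVec_smul, hg.1, hwA, smul_zero, add_zero], fun i hi => ?_⟩
  simpa [mulVec_add, mulVec_smul] using hs i hi

theorem IsEdgeDirAt.exists_eq_smul (hg : IsEdgeDirAt A B d x g) {w : Fin n → ℝ}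
    (hwA : rmat A *ᵥ w = 0) (hwB : ∀ i, (rmat B *ᵥ g) i = 0 → (rmat B *ᵥ w) i = 0) :
    ∃ t : ℝ, w = t • g :=
  IsExtremeDir.exists_eq_smul (fun _ ht _ hz => smul_mem_feasCone ht hz) hg.2.2
    (eventually_add_smul_mem_feasCone hg.2.1 hwA hwB)

theorem IsEdgeDirAt.isCircuit (hg : IsEdgeDirAt A B d x g) : IsCircuit A B g := by
  refine ⟨hg.1, hg.2.1.1, fun y hy hyA hsub => ?_⟩
  obtain ⟨t, rfl⟩ := hg.exists_eq_smul hyA fun i hi => not_not.1 fun h => hsub.1 h hi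
  have ht : t ≠ 0 := by rintro rfl; simp at hy
  exact hsub.ne (by ext i; simp [mulVec_smul, ht])

theorem IsEdgeDirAt.smul (hg : IsEdgeDirAt A B d x g) {t : ℝ} (ht : 0 < t) :
    IsEdgeDirAt A B d x (t • g) := by
  refine ⟨smul_ne_zero ht.ne' hg.1, smul_mem_feasCone ht.le hg.2.1, fun y hy z hz hyz => ?_⟩
  obtain ⟨μ, hμ, hy'⟩ := hg.2.2 (t⁻¹ • y) (smul_mem_feasCone (inv_nonneg.2 ht.le) hy)
    (t⁻¹ • z) (smul_mem_feasCone (inv_nonneg.2 ht.le) hz)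
    (by rw [← smul_add, ← hyz, inv_smul_smul₀ ht.ne'])
  exact ⟨μ, hμ, by rw [← smul_inv_smul₀ ht.ne' y, hy', smul_comm]⟩

theorem IsEdgeDirAt.exists_pos_smul_mem_CAB (hg : IsEdgeDirAt A B d x g) :
    ∃ t : ℝ, 0 < t ∧ t • g ∈ CAB A B := by
  -- `ker M` is the line through `g`, and being integral it contains a nonzero integer vector.
  let M : Matrix (Fin mA ⊕ {i // (rmat B *ᵥ g) i = 0}) (Fin n) ℤ :=
    Matrix.of (Sum.elim A fun i => B i)
  have hMg : rmat M *ᵥ g = 0 := by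
    funext r
    rcases r with i | i
    · exact congrFun hg.2.1.1 i
    · exact i.2
  obtain ⟨w, hw0, hMw⟩ := exists_ne_zero_mulVec_eq_zero_of_rmat M hg.1 hMg
  have hMw' : rmat M *ᵥ rvec w = 0 := by rw [rmat_mulVec_rvec, rvec_eq_zero]; exact hMw
  obtain ⟨t, ht⟩ := hg.exists_eq_smul (w := rvec w) (funext fun i => congrFun hMw' (.inl i))
    fun i hi => congrFun hMw' (.inr ⟨i, hi⟩)
  have ht0 : t ≠ 0 := by
    rintro rfl
    exact hw0 (rvec_eq_zero.1 (by rw [ht, zero_smul]))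
  obtain ⟨v, hv0, s, hs, hvs⟩ : ∃ v : Fin n → ℤ, v ≠ 0 ∧ ∃ s : ℝ, 0 < s ∧ rvec v = s • g := by
    rcases ht0.lt_or_gt with hneg | hpos
    · exact ⟨-w, neg_ne_zero.2 hw0, -t, neg_pos.2 hneg, by
        rw [neg_smul, ← ht]; funext i; simp [rvec]⟩
    · exact ⟨w, hw0, t, hpos, ht⟩
  obtain ⟨gz, hgz, r, hr, hrgz⟩ := exists_gcd_natAbs_eq_one_smul hv0
  rw [hvs, smul_smul] at hrgz
  exact ⟨r * s, mul_pos hr hs, (hg.smul (mul_pos hr hs)).isCircuit,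
    gz, fun i => (congrFun hrgz i).symm, hgz⟩

theorem norm1_eq_dotProduct_of_mem_feasCone (hx : x ∈ Pset A B b d)
    (hx01 : ∀ i, x i = 0 ∨ x i = 1) (hcube : Pset A B b d ⊆ univ.pi fun _ => Icc 0 1)
    {z : Fin n → ℝ} (hz : z ∈ feasCone A B d x) :
    norm1 z = (fun i => 1 - 2 * x i) ⬝ᵥ z := by
  obtain ⟨ε, hε, hxz⟩ := exists_pos_add_smul_mem_Pset hx hz
  refine Finset.sum_congr rfl fun i _ => ?_
  show |z i| = (1 - 2 * x i) * z i
  have hi := hcube hxz i (mem_univ i)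
  simp only [Pi.add_apply, Pi.smul_apply, smul_eq_mul, mem_Icc] at hi
  rcases hx01 i with h | h <;> rw [h] at hi ⊢
  · rw [abs_of_nonneg (nonneg_of_mul_nonneg_right (by linarith) hε)]; ring
  · rw [abs_of_nonpos (nonpos_of_mul_nonpos_right (by linarith) hε)]; ring

end Polytope

theorem steepest_descent_attained_by_edge_general
    (A : Matrix (Fin mA) (Fin n) ℤ) (B : Matrix (Fin mB) (Fin n) ℤ)
    (b : Fin mA → ℤ) (d : Fin mB → ℤ) (c : Fin n → ℤ)
    (hbdd : Bornology.IsBounded (Pset A B b d))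
    (h01 : ∀ v ∈ Set.extremePoints ℝ (Pset A B b d), ∀ i, v i = 0 ∨ v i = 1)
    (x : Fin n → ℝ) (hx : x ∈ Set.extremePoints ℝ (Pset A B b d))
    (hnonopt : ∃ y ∈ Pset A B b d, dotIC c y < dotIC c x) :
    ∃ g : Fin n → ℝ, g ∈ CAB A B ∧
      (∃ ε : ℝ, 0 < ε ∧ x + ε • g ∈ Pset A B b d) ∧
      (∀ g' : Fin n → ℝ, g' ∈ CAB A B →
        (∃ ε : ℝ, 0 < ε ∧ x + ε • g' ∈ Pset A B b d) →
        -(dotIC c g') / norm1 g' ≤ -(dotIC c g) / norm1 g) ∧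
      IsEdgeDirAt A B d x g := by
  set L := dotProductBilin ℝ ℝ fun i => 1 - 2 * x i
  set f := -dotProductBilin ℝ ℝ (rvec c)
  have hL : ∀ z ∈ feasCone A B d x, L z = norm1 z := fun z hz =>
    (norm1_eq_dotProduct_of_mem_feasCone hx.1 (h01 x hx) (Pset_subset_pi_Icc hbdd h01) hz).symm
  have hratio : ∀ z ∈ feasCone A B d x, -(dotIC c z) / norm1 z = f z / L z := fun z hz => by
    rw [hL z hz]; rfl
  have hslice : feasCone A B d x ∩ {z | L z = 1} = feasCone A B d x ∩ {z | norm1 z = 1} := by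
    ext z
    exact and_congr_right fun hz => iff_of_eq (congrArg (· = (1 : ℝ)) (hL z hz))
  obtain ⟨y, hy, hyx⟩ := hnonopt
  have hne : ∃ z ∈ feasCone A B d x, z ≠ 0 :=
    ⟨y - x, mem_feasCone_of_add_smul_mem_Pset hx.1 one_pos (by rwa [one_smul, add_sub_cancel]),
      sub_ne_zero.2 (by rintro rfl; exact hyx.false)⟩
  obtain ⟨g, hgC, hLg, hray, hmax⟩ := exists_isExtremeDir_forall_div_le
    (fun _ ht _ hz => smul_mem_feasCone ht hz) L f (fun z hz hz0 => hL z hz ▸ norm1_pos hz0)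
    (hslice ▸ isCompact_setOf_norm1_eq_one.inter_left isClosed_feasCone) hne
  have hedge : IsEdgeDirAt A B d x g := ⟨by rintro rfl; simp at hLg, hgC, hray⟩
  obtain ⟨t, ht, htg⟩ := hedge.exists_pos_smul_mem_CAB
  refine ⟨t • g, htg, exists_pos_add_smul_mem_Pset hx.1 (smul_mem_feasCone ht.le hgC),
    fun g' hg' ⟨ε, hε, hg'P⟩ => ?_, hedge.smul ht⟩
  have hg'C := mem_feasCone_of_add_smul_mem_Pset hx.1 hε hg'P
  rw [hratio g' hg'C, hratio _ (smul_mem_feasCone ht.le hgC), map_smul, map_smul, smul_eq_mul,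
    smul_eq_mul, mul_div_mul_left _ _ ht.ne', hLg, div_one]
  exact hmax g' hg'C hg'.1.1

/-- Lemma 14 of the paper: over a 0/1 polytope, the steepest-descent
circuit-pivot rule at a non-optimal vertex is attained by a circuit that is an
edge-direction of `P` at that vertex. -/
theorem steepest_descent_attained_by_edge
    (A : Matrix (Fin mA) (Fin n) ℤ) (B : Matrix (Fin mB) (Fin n) ℤ)
    (b : Fin mA → ℤ) (d : Fin mB → ℤ) (c : Fin n → ℤ)
    (hmB : 1 ≤ mB)
    (hA : (rmat A).rank = mA)
    (hAB : (rmat (Matrix.fromRows A B)).rank = n)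
    (hbdd : Bornology.IsBounded (Pset A B b d))
    (h01 : ∀ v ∈ Set.extremePoints ℝ (Pset A B b d), ∀ i, v i = 0 ∨ v i = 1)
    (x : Fin n → ℝ) (hx : x ∈ Set.extremePoints ℝ (Pset A B b d))
    (hnonopt : ∃ y ∈ Pset A B b d, dotIC c y < dotIC c x) :
    ∃ g : Fin n → ℝ, g ∈ CAB A B ∧
      (∃ ε : ℝ, 0 < ε ∧ x + ε • g ∈ Pset A B b d) ∧
      (∀ g' : Fin n → ℝ, g' ∈ CAB A B →
        (∃ ε : ℝ, 0 < ε ∧ x + ε • g' ∈ Pset A B b d) →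
        -(dotIC c g') / norm1 g' ≤ -(dotIC c g) / norm1 g) ∧
      IsEdgeDirAt A B d x g :=
  steepest_descent_attained_by_edge_general A B b d c hbdd h01 x hx hnonopt
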